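/- arXiv:2110.07810 — 2 statements merged into one kernel-verified Lean document; each statement's English description precedes it below -/
import Mathlib

section
/- For all real x, x·tanh(x) ≤ x² - x⁴/3 + 2x⁶/15. -/
/-!
Since `tanh' = 1 - tanh ^ 2`, any two-sided control of `tanh` on `[0, ∞)` turns into a control of
its derivative, which integrates to a sharper bound. Starting from `tanh x ≤ x` this bootstraps
to `x - x ^ 3 / 3 ≤ tanh x` and then to `tanh x ≤ x - x ^ 3 / 3 + 2 * x ^ 5 / 15`; multiplying by
`x` and using that `x * tanh x` is even gives the claim.
-/

open Real

theorem le_of_hasDerivAt_le {f g f' g' : ℝ → ℝ} {a x : ℝ}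
    (hf : ∀ y, HasDerivAt f (f' y) y) (hg : ∀ y, HasDerivAt g (g' y) y)
    (ha : f a ≤ g a) (hle : ∀ y, a ≤ y → f' y ≤ g' y) (hx : a ≤ x) : f x ≤ g x :=
  image_le_of_deriv_right_le_deriv_boundary (fun y _ ↦ (hf y).continuousAt.continuousWithinAt)
    (fun y _ ↦ (hf y).hasDerivWithinAt) ha (fun y _ ↦ (hg y).continuousAt.continuousWithinAt)
    (fun y _ ↦ (hg y).hasDerivWithinAt) (fun y hy ↦ hle y hy.1) ⟨hx, le_rfl⟩

namespace Real

theorem hasDerivAt_tanh (x : ℝ) : HasDerivAt tanh (1 - tanh x ^ 2) x := by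
  have hquot := (hasDerivAt_sinh x).div (hasDerivAt_cosh x) (cosh_pos x).ne'
  rw [show tanh = sinh / cosh from funext tanh_eq_sinh_div_cosh]
  refine hquot.congr_deriv ?_
  rw [Pi.div_apply]
  field_simp

theorem tanh_nonneg {x : ℝ} (hx : 0 ≤ x) : 0 ≤ tanh x := by
  rw [tanh_eq_sinh_div_cosh]
  exact div_nonneg (sinh_nonneg_iff.mpr hx) (cosh_pos x).le

theorem tanh_le_self {x : ℝ} (hx : 0 ≤ x) : tanh x ≤ x :=
  le_of_hasDerivAt_le hasDerivAt_tanh (fun y ↦ hasDerivAt_id y) (by simp)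
    (fun y _ ↦ by nlinarith [sq_nonneg (tanh y)]) hx

theorem self_sub_cube_div_three_le_tanh {x : ℝ} (hx : 0 ≤ x) : x - x ^ 3 / 3 ≤ tanh x := by
  refine le_of_hasDerivAt_le (f' := fun y ↦ 1 - y ^ 2)
    (fun y ↦ ((hasDerivAt_id y).sub ((hasDerivAt_pow 3 y).div_const 3)).congr_deriv
      (by norm_num))
    hasDerivAt_tanh (by simp) (fun y hy ↦ ?_) hx
  have := pow_le_pow_left₀ (tanh_nonneg hy) (tanh_le_self hy) 2
  linarith

theorem tanh_le_taylor {x : ℝ} (hx : 0 ≤ x) : tanh x ≤ x - x ^ 3 / 3 + 2 * x ^ 5 / 15 := by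
  refine le_of_hasDerivAt_le (g' := fun y ↦ 1 - y ^ 2 + 2 * y ^ 4 / 3) hasDerivAt_tanh
    (fun y ↦ (((hasDerivAt_id y).sub ((hasDerivAt_pow 3 y).div_const 3)).add
      (((hasDerivAt_pow 5 y).const_mul 2).div_const 15)).congr_deriv (by norm_num; ring))
    (by simp) (fun y hy ↦ ?_) hx
  suffices y ^ 2 - 2 * y ^ 4 / 3 ≤ tanh y ^ 2 by linarith
  rcases le_total (y ^ 2) (3 / 2) with hsmall | hlarge
  · -- `0 ≤ y - y ^ 3 / 3 ≤ tanh y` and `(y - y ^ 3 / 3) ^ 2 ≥ y ^ 2 - 2 * y ^ 4 / 3`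
    have hcubic : 0 ≤ y - y ^ 3 / 3 := by nlinarith
    have := pow_le_pow_left₀ hcubic (self_sub_cube_div_three_le_tanh hy) 2
    nlinarith [pow_nonneg hy 6]
  · -- the left side is `y ^ 2 * (1 - 2 * y ^ 2 / 3) ≤ 0`
    nlinarith [sq_nonneg (tanh y), sq_nonneg y]

end Real

theorem mul_tanh_le (x : ℝ) :
    x * Real.tanh x ≤ x ^ 2 - x ^ 4 / 3 + 2 * x ^ 6 / 15 := by
  have of_nonneg : ∀ y : ℝ, 0 ≤ y → y * tanh y ≤ y ^ 2 - y ^ 4 / 3 + 2 * y ^ 6 / 15 :=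
    fun y hy ↦ by nlinarith [mul_le_mul_of_nonneg_left (tanh_le_taylor hy) hy]
  rcases le_total 0 x with hx | hx
  · exact of_nonneg x hx
  · calc x * tanh x = -x * tanh (-x) := by rw [tanh_neg, neg_mul_neg]
      _ ≤ (-x) ^ 2 - (-x) ^ 4 / 3 + 2 * (-x) ^ 6 / 15 := of_nonneg (-x) (neg_nonneg.mpr hx)
      _ = x ^ 2 - x ^ 4 / 3 + 2 * x ^ 6 / 15 := by ring
end

section
/- Let f : ℝ^d → ℝ be convex and differentiable with minimizer θ*, and suppose on a ball B(θ*, ρ) there exist constants c₁, c₂ > 0 and α ≥ 0 such that (i) f(θ) - f(θ*) ≥ ‖∇f(θ)‖²/(2c₁‖θ - θ*‖^α) and (ii) ‖θ - θ*‖ ≤ ((α+2)/c₂)·(f(θ) - f(θ*))^{1/(α+2)} for all θ ∈ B(θ*, ρ) with θ ≠ θ*. Then for all such θ the Polyak operator F(θ) = θ - ((f(θ) - f(θ*))/‖∇f(θ)‖²)·∇f(θ) satisfies ‖F(θ) - θ*‖ ≤ κ‖θ - θ*‖ with κ = (1 - c₂^{α+2}/(2c₁(α+2)^{α+2}))^{1/2}.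 -/
/-!
Write `e = θ - θ*`, `Δ = f θ - f θ*` and `G = ∇f θ`. Convexity gives `Δ ≤ ⟪G, e⟫`, so the Polyak
step `e ↦ e - (Δ / ‖G‖²) G` decreases `‖e‖²` by at least `Δ² / ‖G‖²`. Condition (i) bounds this
decrease below by `Δ / (2 c₁ ‖e‖^α)`, and condition (ii), raised to the power `α + 2`, bounds `Δ`
below by `(c₂ ‖e‖ / (α + 2)) ^ (α + 2)`; together the decrease is at least
`c₂^(α+2) / (2 c₁ (α+2)^(α+2)) · ‖e‖²`.
-/

open Real

open scoped RealInnerProductSpace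

theorem ConvexOn.le_sub_of_hasFDerivAt {E : Type*} [NormedAddCommGroup E] [NormedSpace ℝ E]
    {s : Set E} {f : E → ℝ} {f' : E →L[ℝ] ℝ} {x y : E} (hf : ConvexOn ℝ s f) (hx : x ∈ s)
    (hy : y ∈ s) (hf' : HasFDerivAt f f' x) :
    f' (y - x) ≤ f y - f x := by
  have hline : ConvexOn ℝ (AffineMap.lineMap (k := ℝ) x y ⁻¹' s)
      (f ∘ AffineMap.lineMap (k := ℝ) x y) :=
    hf.comp_affineMap _
  have hderiv : HasDerivAt (f ∘ AffineMap.lineMap (k := ℝ) x y) (f' (y - x)) 0 := by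
    refine hf'.comp_hasDerivAt_of_eq 0 AffineMap.hasDerivAt_lineMap ?_
    simp
  simpa [slope_def_field] using hline.le_slope_of_hasDerivAt (x := 0) (y := 1)
    (by simpa using hx) (by simpa using hy) one_pos hderiv

theorem norm_sub_polyak_step_sq_le {E : Type*} [NormedAddCommGroup E] [InnerProductSpace ℝ E]
    {e G : E} {Δ : ℝ} (hΔ : 0 ≤ Δ) (hinner : Δ ≤ ⟪G, e⟫) :
    ‖e - (Δ / ‖G‖ ^ 2) • G‖ ^ 2 ≤ ‖e‖ ^ 2 - Δ ^ 2 / ‖G‖ ^ 2 := by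
  have hstep : (Δ / ‖G‖ ^ 2) ^ 2 * ‖G‖ ^ 2 = Δ / ‖G‖ ^ 2 * Δ := by
    rcases eq_or_ne ‖G‖ 0 with hG | hG
    · simp [hG]
    · field_simp
  have hdescent : Δ / ‖G‖ ^ 2 * Δ ≤ Δ / ‖G‖ ^ 2 * ⟪e, G⟫ := by
    rw [real_inner_comm]
    exact mul_le_mul_of_nonneg_left hinner (by positivity)
  rw [norm_sub_sq_real, real_inner_smul_right, norm_smul, norm_of_nonneg (by positivity), mul_pow,
    hstep]
  have hsq : Δ / ‖G‖ ^ 2 * Δ = Δ ^ 2 / ‖G‖ ^ 2 := by ring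
  linarith

theorem rpow_le_of_le_div_mul_rpow_inv {p c r Δ : ℝ} (hp : 0 < p) (hc : 0 < c) (hr : 0 ≤ r)
    (hΔ : 0 ≤ Δ) (h : r ≤ p / c * Δ ^ (1 / p)) :
    (c * r / p) ^ p ≤ Δ := by
  rw [← le_rpow_inv_iff_of_pos (by positivity) hΔ hp, ← one_div, div_le_iff₀ hp]
  calc c * r ≤ c * (p / c * Δ ^ (1 / p)) := mul_le_mul_of_nonneg_left h hc.le
    _ = Δ ^ (1 / p) * p := by field_simp

theorem polyak_decrease_ge {r Δ G c₁ c₂ α : ℝ} (hr : 0 < r) (hG : 0 < G) (hc₁ : 0 < c₁)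
    (hc₂ : 0 ≤ c₂) (hα : 0 < α + 2) (hsmooth : G ^ 2 / (2 * c₁ * r ^ α) ≤ Δ)
    (hloja : (c₂ * r / (α + 2)) ^ (α + 2) ≤ Δ) :
    c₂ ^ (α + 2) / (2 * c₁ * (α + 2) ^ (α + 2)) * r ^ 2 ≤ Δ ^ 2 / G ^ 2 := by
  have hΔ : 0 < Δ := lt_of_lt_of_le (by positivity) hsmooth
  calc c₂ ^ (α + 2) / (2 * c₁ * (α + 2) ^ (α + 2)) * r ^ 2
      = (c₂ * r / (α + 2)) ^ (α + 2) / (2 * c₁ * r ^ α) := by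
        rw [div_rpow (by positivity) hα.le, mul_rpow hc₂ hr.le, rpow_add hr, rpow_two]
        field_simp
    _ ≤ Δ / (2 * c₁ * r ^ α) := by gcongr
    _ ≤ Δ ^ 2 / G ^ 2 := by
        rw [div_le_div_iff₀ (by positivity) (by positivity)]
        rw [div_le_iff₀ (by positivity)] at hsmooth
        nlinarith

theorem polyak_population_contraction_general
    {d : ℕ} (f : EuclideanSpace ℝ (Fin d) → ℝ)
    (g : EuclideanSpace ℝ (Fin d) → EuclideanSpace ℝ (Fin d))
    (hconv : ConvexOn ℝ Set.univ f)
    (hgrad : ∀ x, HasGradientAt f (g x) x)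
    (θstar : EuclideanSpace ℝ (Fin d)) (hmin : ∀ z, f θstar ≤ f z)
    (ρ c₁ c₂ α : ℝ) (hc₁ : 0 < c₁) (hc₂ : 0 < c₂) (hα : 0 ≤ α)
    (hsmooth : ∀ θ ∈ Metric.ball θstar ρ, θ ≠ θstar →
      f θ - f θstar ≥ ‖g θ‖ ^ 2 / (2 * c₁ * ‖θ - θstar‖ ^ α))
    (hloja : ∀ θ ∈ Metric.ball θstar ρ, θ ≠ θstar →
      ‖θ - θstar‖ ≤ ((α + 2) / c₂) * (f θ - f θstar) ^ (1 / (α + 2))) :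
    ∀ θ ∈ Metric.ball θstar ρ, θ ≠ θstar →
      ‖(θ - ((f θ - f θstar) / ‖g θ‖ ^ 2) • g θ) - θstar‖
        ≤ Real.sqrt (1 - c₂ ^ (α + 2) / (2 * c₁ * (α + 2) ^ (α + 2))) * ‖θ - θstar‖ := by
  intro θ hθ hne
  have hr : 0 < ‖θ - θstar‖ := norm_pos_iff.2 (sub_ne_zero.2 hne)
  have hΔ : 0 ≤ f θ - f θstar := sub_nonneg.2 (hmin θ)
  have hinner : f θ - f θstar ≤ ⟪g θ, θ - θstar⟫ := by
    have := hconv.le_sub_of_hasFDerivAt (Set.mem_univ θ) (Set.mem_univ θstar) (hgrad θ).hasFDerivAt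
    rw [InnerProductSpace.toDual_apply_apply, ← neg_sub θ, inner_neg_right] at this
    linarith
  have hgap : (c₂ * ‖θ - θstar‖ / (α + 2)) ^ (α + 2) ≤ f θ - f θstar :=
    rpow_le_of_le_div_mul_rpow_inv (by positivity) hc₂ hr.le hΔ (hloja θ hθ hne)
  have hG : 0 < ‖g θ‖ := by
    refine norm_pos_iff.2 fun hzero ↦ ?_
    rw [hzero, inner_zero_left] at hinner
    exact (hgap.trans hinner).not_gt
      (rpow_pos_of_pos (div_pos (mul_pos hc₂ hr) (by positivity)) _)
  have hdecrease := polyak_decrease_ge hr hG hc₁ hc₂.le (by positivity) (hsmooth θ hθ hne) hgap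
  have hstep := norm_sub_polyak_step_sq_le hΔ hinner
  rw [sub_right_comm, ← sqrt_sq hr.le, ← sqrt_mul' _ (sq_nonneg _)]
  exact le_sqrt_of_sq_le (by linarith)

theorem polyak_population_contraction
    {d : ℕ} (f : EuclideanSpace ℝ (Fin d) → ℝ)
    (g : EuclideanSpace ℝ (Fin d) → EuclideanSpace ℝ (Fin d))
    (hconv : ConvexOn ℝ Set.univ f)
    (hgrad : ∀ x, HasGradientAt f (g x) x)
    (θstar : EuclideanSpace ℝ (Fin d)) (hmin : ∀ z, f θstar ≤ f z)
    (ρ c₁ c₂ α : ℝ) (hρ : 0 < ρ) (hc₁ : 0 < c₁) (hc₂ : 0 < c₂) (hα : 0 ≤ α)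
    (hsmooth : ∀ θ ∈ Metric.ball θstar ρ, θ ≠ θstar →
      f θ - f θstar ≥ ‖g θ‖ ^ 2 / (2 * c₁ * ‖θ - θstar‖ ^ α))
    (hloja : ∀ θ ∈ Metric.ball θstar ρ, θ ≠ θstar →
      ‖θ - θstar‖ ≤ ((α + 2) / c₂) * (f θ - f θstar) ^ (1 / (α + 2))) :
    ∀ θ ∈ Metric.ball θstar ρ, θ ≠ θstar →
      ‖(θ - ((f θ - f θstar) / ‖g θ‖ ^ 2) • g θ) - θstar‖
        ≤ Real.sqrt (1 - c₂ ^ (α + 2) / (2 * c₁ * (α + 2) ^ (α + 2))) * ‖θ - θstar‖ :=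
  polyak_population_contraction_general f g hconv hgrad θstar hmin ρ c₁ c₂ α hc₁ hc₂ hα hsmooth
    hloja
end
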